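/- Let ⋆ ∈ 𝒫 and let Δ be the deconcatenation coproduct on A⟨X⟩ and ε the counit sending the empty word to 1 and other words to 0. Then Δ is an algebra morphism for ⋆: Δ(w₁ ⋆ w₂) = Δ(w₁) ⋆ Δ(w₂) for all words w₁, w₂, where ⋆ acts componentwise on tensors: (u⊗v)⋆(u'⊗v') = (u⋆u')⊗(v⋆v'). Hence (A⟨X⟩, ⋆, Δ, ε) is a bialgebra. -/

import Mathlib

open Finsupp Finset Filter

/-- A word `w` seen as an element of the free module `A⟨X⟩` (coefficient 1). -/
noncomputable def delta (A : Type*) [CommRing A] {X : Type*} (w : List X) : List X →₀ A :=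
  Finsupp.single w 1

/-- Left concatenation by a letter, as a linear map on `A⟨X⟩`. -/
noncomputable def lcons (A : Type*) [CommRing A] {X : Type*} (x : X) :
    (List X →₀ A) →ₗ[A] (List X →₀ A) :=
  Finsupp.lmapDomain A A (List.cons x)

open TensorProduct in
/-- The deconcatenation coproduct `Δ : A⟨X⟩ → A⟨X⟩ ⊗ A⟨X⟩`, `Δw = Σ_(uv=w) u ⊗ v`. -/
noncomputable def deconcat (A : Type*) [CommRing A] {X : Type*} :
    (List X →₀ A) →ₗ[A] TensorProduct A (List X →₀ A) (List X →₀ A) :=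
  Finsupp.linearCombination A (fun w : List X =>
    ∑ i ∈ Finset.range (w.length + 1), delta A (w.take i) ⊗ₜ[A] delta A (w.drop i))

/-!
Both sides obey the same recursion in `(w₁, w₂)`. Since `Δ(a·f) = 1 ⊗ a·f + (a· ⊗ id)(Δf)`,
applying `Δ` to `au ⋆ bv = a(u ⋆ bv) + b(au ⋆ v) + [a,b](u ⋆ v)` expresses `Δ(au ⋆ bv)` through
`Δ(u ⋆ bv)`, `Δ(au ⋆ v)` and `Δ(u ⋆ v)`. Splitting the double sum `Δ(au) ⋆ Δ(bv)` according to
whether the left tensor factors of `Δ(au)`, `Δ(bv)` are empty, and expanding the terms where both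
are nonempty by the same recursion, gives the identical expression in terms of
`Δ(u) ⋆ Δ(bv)`, `Δ(au) ⋆ Δ(v)` and `Δ(u) ⋆ Δ(v)`. Induction on the two words concludes.
-/

open TensorProduct

theorem Finset.sum_range_succ'_sum_range_succ' {M : Type*} [AddCommMonoid M] (n m : ℕ)
    (f : ℕ → ℕ → M) :
    ∑ i ∈ range (n + 1), ∑ j ∈ range (m + 1), f i j
      = ∑ i ∈ range n, ∑ j ∈ range m, f (i + 1) (j + 1) + ∑ i ∈ range n, f (i + 1) 0
        + ∑ j ∈ range m, f 0 (j + 1) + f 0 0 := by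
  simp only [sum_range_succ', sum_add_distrib]
  abel

section Deconcat

variable {A X : Type*} [CommRing A]

theorem lcons_delta (x : X) (w : List X) : lcons A x (delta A w) = delta A (x :: w) := by
  simp [lcons, delta]

theorem deconcat_delta (w : List X) :
    deconcat A (delta A w)
      = ∑ i ∈ range (w.length + 1), delta A (w.take i) ⊗ₜ[A] delta A (w.drop i) := by
  simp [deconcat, delta]

theorem deconcat_lcons (x : X) (f : List X →₀ A) :
    deconcat A (lcons A x f)
      = delta A [] ⊗ₜ[A] lcons A x f + (lcons A x).rTensor _ (deconcat A f) := by
  induction f using Finsupp.induction_linear with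
  | zero => simp
  | add f g hf hg =>
    simp only [map_add, hf, hg, tmul_add]
    abel
  | single w c =>
    rw [← mul_one c, ← smul_eq_mul, ← Finsupp.smul_single, ← delta]
    simp only [map_smul, tmul_smul, ← smul_add, lcons_delta, deconcat_delta, List.length_cons,
      sum_range_succ' _ (w.length + 1), List.take_succ_cons, List.drop_succ_cons, List.take_zero,
      List.drop_zero, map_sum, LinearMap.rTensor_tmul]
    rw [add_comm]

end Deconcat

section StarDeconcat

variable {A X : Type*} [CommRing A]
  (star : (List X →₀ A) →ₗ[A] (List X →₀ A) →ₗ[A] (List X →₀ A))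

/-- `au ⋆ bv = a(u ⋆ bv) + b(au ⋆ v) + [a,b](u ⋆ v)`, with the bracket `[a,b] = brC a b • brX a b`. -/
def QuasiShuffleRecursion (brC : X → X → A) (brX : X → X → X) : Prop :=
  ∀ (a b : X) (u v : List X),
    star (delta A (a :: u)) (delta A (b :: v)) =
      lcons A a (star (delta A u) (delta A (b :: v)))
        + lcons A b (star (delta A (a :: u)) (delta A v))
        + brC a b • lcons A (brX a b) (star (delta A u) (delta A v))

/-- `Δ(w₁) ⋆ Δ(w₂)`, with `⋆` acting componentwise on tensors. -/
noncomputable def deconcatStar (w₁ w₂ : List X) : (List X →₀ A) ⊗[A] (List X →₀ A) :=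
  ∑ i ∈ range (w₁.length + 1), ∑ j ∈ range (w₂.length + 1),
    star (delta A (w₁.take i)) (delta A (w₂.take j))
      ⊗ₜ[A] star (delta A (w₁.drop i)) (delta A (w₂.drop j))

theorem deconcat_star_nil_left
    (hunitl : ∀ w : List X, star (delta A []) (delta A w) = delta A w) (w : List X) :
    deconcat A (star (delta A []) (delta A w)) = deconcatStar star [] w := by
  simp [deconcatStar, hunitl, deconcat_delta]

theorem deconcat_star_nil_right
    (hunitr : ∀ w : List X, star (delta A w) (delta A []) = delta A w) (w : List X) :
    deconcat A (star (delta A w) (delta A [])) = deconcatStar star w [] := by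
  simp [deconcatStar, hunitr, deconcat_delta]

theorem deconcat_star_cons_cons (brC : X → X → A) (brX : X → X → X)
    (hrec : QuasiShuffleRecursion star brC brX) (a b : X) (u v : List X) :
    deconcat A (star (delta A (a :: u)) (delta A (b :: v)))
      = delta A [] ⊗ₜ[A] star (delta A (a :: u)) (delta A (b :: v))
        + (lcons A a).rTensor _ (deconcat A (star (delta A u) (delta A (b :: v))))
        + (lcons A b).rTensor _ (deconcat A (star (delta A (a :: u)) (delta A v)))
        + brC a b • (lcons A (brX a b)).rTensor _ (deconcat A (star (delta A u) (delta A v))) := by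
  rw [hrec]
  simp only [map_add, map_smul, deconcat_lcons, tmul_add, tmul_smul, smul_add]
  abel

theorem deconcatStar_cons_cons (brC : X → X → A) (brX : X → X → X)
    (hunitl : ∀ w : List X, star (delta A []) (delta A w) = delta A w)
    (hunitr : ∀ w : List X, star (delta A w) (delta A []) = delta A w)
    (hrec : QuasiShuffleRecursion star brC brX) (a b : X) (u v : List X) :
    deconcatStar star (a :: u) (b :: v)
      = delta A [] ⊗ₜ[A] star (delta A (a :: u)) (delta A (b :: v))
        + (lcons A a).rTensor _ (deconcatStar star u (b :: v))
        + (lcons A b).rTensor _ (deconcatStar star (a :: u) v)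
        + brC a b • (lcons A (brX a b)).rTensor _ (deconcatStar star u v) := by
  have ha : (lcons A a).rTensor _ (deconcatStar star u (b :: v))
      = ∑ i ∈ range (u.length + 1), ∑ j ∈ range (v.length + 1),
          lcons A a (star (delta A (u.take i)) (delta A (b :: v.take j)))
            ⊗ₜ[A] star (delta A (u.drop i)) (delta A (v.drop j))
        + ∑ i ∈ range (u.length + 1),
          delta A (a :: u.take i) ⊗ₜ[A] star (delta A (u.drop i)) (delta A (b :: v)) := by
    simp only [deconcatStar, map_add, map_sum, LinearMap.rTensor_tmul, List.length_cons,
      sum_range_succ' _ (v.length + 1), List.take_succ_cons, List.drop_succ_cons, List.take_zero,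
      List.drop_zero, hunitr, lcons_delta, sum_add_distrib]
  have hb : (lcons A b).rTensor _ (deconcatStar star (a :: u) v)
      = ∑ i ∈ range (u.length + 1), ∑ j ∈ range (v.length + 1),
          lcons A b (star (delta A (a :: u.take i)) (delta A (v.take j)))
            ⊗ₜ[A] star (delta A (u.drop i)) (delta A (v.drop j))
        + ∑ j ∈ range (v.length + 1),
          delta A (b :: v.take j) ⊗ₜ[A] star (delta A (a :: u)) (delta A (v.drop j)) := by
    simp only [deconcatStar, map_sum, LinearMap.rTensor_tmul, List.length_cons]
    rw [sum_range_succ' _ (u.length + 1)]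
    simp only [List.take_succ_cons, List.drop_succ_cons, List.take_zero, List.drop_zero, hunitl,
      lcons_delta]
  rw [ha, hb, deconcatStar, List.length_cons, List.length_cons,
    sum_range_succ'_sum_range_succ']
  simp only [deconcatStar, List.take_succ_cons, List.drop_succ_cons, List.take_zero,
    List.drop_zero, hunitl, hunitr, hrec a b, add_tmul, ← smul_tmul', sum_add_distrib, map_sum,
    LinearMap.rTensor_tmul, Finset.smul_sum]
  abel

theorem deconcat_star_delta (brC : X → X → A) (brX : X → X → X)
    (hunitl : ∀ w : List X, star (delta A []) (delta A w) = delta A w)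
    (hunitr : ∀ w : List X, star (delta A w) (delta A []) = delta A w)
    (hrec : QuasiShuffleRecursion star brC brX) (w₁ w₂ : List X) :
    deconcat A (star (delta A w₁) (delta A w₂)) = deconcatStar star w₁ w₂ := by
  induction w₁ generalizing w₂ with
  | nil => exact deconcat_star_nil_left star hunitl w₂
  | cons a u ih₁ =>
    induction w₂ with
    | nil => exact deconcat_star_nil_right star hunitr (a :: u)
    | cons b v ih₂ =>
      rw [deconcat_star_cons_cons star brC brX hrec, ih₁, ih₁, ih₂,
        deconcatStar_cons_cons star brC brX hunitl hunitr hrec]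

end StarDeconcat

theorem stmt8_general {A X : Type*} [CommRing A]
    (star : (List X →₀ A) →ₗ[A] (List X →₀ A) →ₗ[A] (List X →₀ A))
    (brC : X → X → A) (brX : X → X → X)
    (hunitl : ∀ w : List X, star (delta A []) (delta A w) = delta A w)
    (hunitr : ∀ w : List X, star (delta A w) (delta A []) = delta A w)
    (hrec : ∀ (a b : X) (u v : List X),
      star (delta A (a :: u)) (delta A (b :: v)) =
        lcons A a (star (delta A u) (delta A (b :: v)))
          + lcons A b (star (delta A (a :: u)) (delta A v))
          + brC a b • lcons A (brX a b) (star (delta A u) (delta A v))) :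
    ∀ w₁ w₂ : List X,
      deconcat A (star (delta A w₁) (delta A w₂))
        = ∑ i ∈ Finset.range (w₁.length + 1), ∑ j ∈ Finset.range (w₂.length + 1),
            star (delta A (w₁.take i)) (delta A (w₂.take j))
              ⊗ₜ[A] star (delta A (w₁.drop i)) (delta A (w₂.drop j)) :=
  deconcat_star_delta star brC brX hunitl hunitr hrec

open TensorProduct in
/-- for `⋆ ∈ 𝒫`, the deconcatenation coproduct is a `⋆`-morphism:
`Δ(w₁ ⋆ w₂) = Δ(w₁) ⋆ Δ(w₂)`, where `⋆` acts componentwise on tensors (here the right-hand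
side `Δ(w₁) ⋆ Δ(w₂)` is written out as
`Σ_(u₁u₂=w₁) Σ_(v₁v₂=w₂) (u₁ ⋆ v₁) ⊗ (u₂ ⋆ v₂)`).  Hence `(A⟨X⟩, ⋆, Δ, ε)` is a bialgebra. -/
theorem stmt8 {A X : Type*} [CommRing A]
    (star : (List X →₀ A) →ₗ[A] (List X →₀ A) →ₗ[A] (List X →₀ A))
    (brC : X → X → A) (brX : X → X → X)
    (hunitl : ∀ w : List X, star (delta A []) (delta A w) = delta A w)
    (hunitr : ∀ w : List X, star (delta A w) (delta A []) = delta A w)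
    (hrec : ∀ (a b : X) (u v : List X),
      star (delta A (a :: u)) (delta A (b :: v)) =
        lcons A a (star (delta A u) (delta A (b :: v)))
          + lcons A b (star (delta A (a :: u)) (delta A v))
          + brC a b • lcons A (brX a b) (star (delta A u) (delta A v)))
    (hsym : ∀ a b : X, brC a b • delta A [brX a b] = brC b a • delta A [brX b a])
    (hassoc : ∀ a b c : X,
      (brC a b * brC (brX a b) c) • delta A [brX (brX a b) c]
        = (brC b c * brC a (brX b c)) • delta A [brX a (brX b c)]) :
    ∀ w₁ w₂ : List X,
      deconcat A (star (delta A w₁) (delta A w₂))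
        = ∑ i ∈ Finset.range (w₁.length + 1), ∑ j ∈ Finset.range (w₂.length + 1),
            star (delta A (w₁.take i)) (delta A (w₂.take j))
              ⊗ₜ[A] star (delta A (w₁.drop i)) (delta A (w₂.drop j)) :=
  stmt8_general star brC brX hunitl hunitr hrec
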